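/- Fix z ∈ ℝ and let U = {(q,p) ∈ ℝ² : p ≠ 0}. Define h_{z,2} = 1/p − q²p and h_{z,1} = −sinhc(2z h_{z,2})·q p. Then, with respect to the canonical Poisson bracket {f,g} = ∂f/∂q ∂g/∂p − ∂f/∂p ∂g/∂q, one has {h_{z,1}, h_{z,2}} = sinhc(2z h_{z,2})·h_{z,2} on U; moreover h_{z,1}(q,p) → −qp and h_{z,2}(q,p) = 1/p − q²p as z → 0, recovering the undeformed SISf Hamiltonians. -/

import Mathlib

/-- The cardinal hyperbolic sine: `sinhc t = sinh t / t` for `t ≠ 0`, `sinhc 0 = 1`. -/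
noncomputable def sinhc (t : ℝ) : ℝ := if t = 0 then 1 else Real.sinh t / t

/-- Canonical Poisson bracket on the plane (coordinates `(q,p)`):
`{f,g} = ∂f/∂q ∂g/∂p − ∂f/∂p ∂g/∂q`. -/
noncomputable def pb (f g : ℝ × ℝ → ℝ) (p : ℝ × ℝ) : ℝ :=
  fderiv ℝ f p (1, 0) * fderiv ℝ g p (0, 1) - fderiv ℝ f p (0, 1) * fderiv ℝ g p (1, 0)

/-- Undeformed SISf Hamiltonian `h₂ = 1/p − q²p` (independent of `z`). -/
noncomputable def hSIS2 : ℝ × ℝ → ℝ := fun x => 1 / x.2 - x.1 ^ 2 * x.2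

/-- Deformed SISf Hamiltonian `h_{z,1} = −sinhc(2z h_{z,2})·qp`. -/
noncomputable def hSIS1 (z : ℝ) : ℝ × ℝ → ℝ := fun x =>
  -(sinhc (2 * z * hSIS2 x) * (x.1 * x.2))

/-- Derivative of `sinhc`. -/
noncomputable def sinhcD (t : ℝ) : ℝ :=
  if t = 0 then 0 else Real.cosh t / t - Real.sinh t / t ^ 2

lemma sinh_le_mul_cosh {x : ℝ} (hx : 0 ≤ x) : Real.sinh x ≤ x * Real.cosh x := by
  have hmono : MonotoneOn (fun y : ℝ => y * Real.cosh y - Real.sinh y) (Set.Ici 0) := by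
    apply monotoneOn_of_deriv_nonneg (convex_Ici 0)
    · fun_prop
    · apply Differentiable.differentiableOn; fun_prop
    · intro y hy
      have hd : HasDerivAt (fun y : ℝ => y * Real.cosh y - Real.sinh y)
          (1 * Real.cosh y + y * Real.sinh y - Real.cosh y) y :=
        ((hasDerivAt_id y).mul (Real.hasDerivAt_cosh y)).sub (Real.hasDerivAt_sinh y)
      rw [hd.deriv]
      have hy0 : (0:ℝ) ≤ y := le_of_lt (by simpa using hy)
      nlinarith [Real.sinh_nonneg_iff.2 hy0]
  have h0 : (0:ℝ) ∈ Set.Ici (0:ℝ) := Set.self_mem_Ici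
  have := hmono h0 hx hx
  simpa using this

lemma abs_sinh_sub_le {t : ℝ} : |Real.sinh t - t| ≤ |t| * (Real.cosh t - 1) := by
  rcases le_or_gt 0 t with ht | ht
  · have h1 : t ≤ Real.sinh t := Real.self_le_sinh_iff.2 ht
    have h2 : Real.sinh t ≤ t * Real.cosh t := sinh_le_mul_cosh ht
    rw [abs_of_nonneg (by linarith), abs_of_nonneg ht]
    nlinarith
  · have ht' : (0:ℝ) ≤ -t := by linarith
    have h1 : -t ≤ Real.sinh (-t) := Real.self_le_sinh_iff.2 ht'
    have h2 : Real.sinh (-t) ≤ -t * Real.cosh (-t) := sinh_le_mul_cosh ht'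
    rw [Real.sinh_neg] at h1 h2
    rw [Real.cosh_neg] at h2
    rw [abs_of_nonpos (by linarith), abs_of_neg ht]
    nlinarith

lemma hasDerivAt_sinhc_zero : HasDerivAt sinhc 0 0 := by
  rw [hasDerivAt_iff_tendsto_slope]
  have hcosh : Filter.Tendsto (fun t : ℝ => |(Real.cosh t - 1) / t|)
      (nhdsWithin 0 {(0:ℝ)}ᶜ) (nhds 0) := by
    have h := Real.hasDerivAt_cosh 0
    rw [hasDerivAt_iff_tendsto_slope] at h
    have h' : Filter.Tendsto (fun t : ℝ => (Real.cosh t - 1) / t)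
        (nhdsWithin 0 {(0:ℝ)}ᶜ) (nhds 0) := by
      simp only [slope_fun_def_field, Real.cosh_zero, Real.sinh_zero, sub_zero] at h
      exact h
    simpa using h'.abs
  apply squeeze_zero_norm' _ hcosh
  filter_upwards [self_mem_nhdsWithin] with t ht
  have ht : t ≠ 0 := ht
  have hslope : slope sinhc 0 t = (Real.sinh t - t) / t ^ 2 := by
    rw [slope_def_field]
    simp only [sinhc, if_neg ht, sub_zero, eq_self_iff_true, if_true]
    have h1 : Real.sinh t / t - 1 = (Real.sinh t - t) / t := by field_simp
    rw [h1, div_div, ← sq]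
  rw [hslope, Real.norm_eq_abs, abs_div, abs_div, abs_pow]
  have hc1 : |Real.cosh t - 1| = Real.cosh t - 1 :=
    abs_of_nonneg (by linarith [Real.one_le_cosh t])
  rw [hc1]
  have htpos : 0 < |t| := abs_pos.2 ht
  rw [sq, div_le_div_iff₀ (by positivity) htpos]
  calc |Real.sinh t - t| * |t| ≤ (|t| * (Real.cosh t - 1)) * |t| := by
        apply mul_le_mul_of_nonneg_right abs_sinh_sub_le (abs_nonneg t)
    _ = (Real.cosh t - 1) * (|t| * |t|) := by ring

lemma hasDerivAt_sinhc (t : ℝ) : HasDerivAt sinhc (sinhcD t) t := by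
  rcases eq_or_ne t 0 with rfl | ht
  · simpa [sinhcD] using hasDerivAt_sinhc_zero
  · have h : HasDerivAt (fun s => Real.sinh s / s)
        (Real.cosh t / t - Real.sinh t / t ^ 2) t := by
      have := (Real.hasDerivAt_sinh t).div (hasDerivAt_id t) ht
      refine this.congr_deriv ?_
      simp only [id]; field_simp
    have heq : sinhc =ᶠ[nhds t] fun s => Real.sinh s / s := by
      filter_upwards [compl_singleton_mem_nhds ht] with s hs
      simp [sinhc, if_neg (by simpa using hs)]
    rw [sinhcD, if_neg ht]
    exact h.congr_of_eventuallyEq heq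

/-- On `{p ≠ 0}` the deformed SISf Hamiltonians satisfy
`{h_{z,1}, h_{z,2}} = sinhc(2z h_{z,2})·h_{z,2}`, and as `z → 0` one recovers the
undeformed Hamiltonians `h₁ = −qp`, `h₂ = 1/p − q²p`. -/
theorem deformed_sisf (z : ℝ) :
    (∀ x : ℝ × ℝ, x.2 ≠ 0 →
      pb (hSIS1 z) hSIS2 x = sinhc (2 * z * hSIS2 x) * hSIS2 x) ∧
    (∀ x : ℝ × ℝ, x.2 ≠ 0 →
      Filter.Tendsto (fun w : ℝ => hSIS1 w x) (nhds 0) (nhds (-(x.1 * x.2)))) ∧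
    (∀ x : ℝ × ℝ, x.2 ≠ 0 → hSIS2 x = 1 / x.2 - x.1 ^ 2 * x.2) := by
  refine ⟨?_, ?_, fun x _ => rfl⟩
  · intro x hx
    -- building blocks
    have hq : HasFDerivAt (fun y : ℝ × ℝ => y.1) (ContinuousLinearMap.fst ℝ ℝ ℝ) x :=
      hasFDerivAt_fst
    have hp : HasFDerivAt (fun y : ℝ × ℝ => y.2) (ContinuousLinearMap.snd ℝ ℝ ℝ) x :=
      hasFDerivAt_snd
    have hinv : HasFDerivAt (fun y : ℝ × ℝ => (y.2)⁻¹)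
        ((-(x.2 ^ 2)⁻¹) • ContinuousLinearMap.snd ℝ ℝ ℝ) x :=
      (hasDerivAt_inv hx).comp_hasFDerivAt x hp
    have hq2 : HasFDerivAt (fun y : ℝ × ℝ => y.1 ^ 2)
        ((2 * x.1 ^ 1) • ContinuousLinearMap.fst ℝ ℝ ℝ) x :=
      (hasDerivAt_pow 2 x.1).comp_hasFDerivAt x hq
    -- derivative of h2
    have h2d : HasFDerivAt hSIS2
        ((-(x.2 ^ 2)⁻¹) • ContinuousLinearMap.snd ℝ ℝ ℝ -
          (x.1 ^ 2 • ContinuousLinearMap.snd ℝ ℝ ℝ +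
            x.2 • (2 * x.1 ^ 1) • ContinuousLinearMap.fst ℝ ℝ ℝ)) x := by
      have : HasFDerivAt (fun y : ℝ × ℝ => (y.2)⁻¹ - y.1 ^ 2 * y.2) _ x :=
        hinv.sub (hq2.mul hp)
      refine this.congr_of_eventuallyEq ?_
      filter_upwards with y
      simp [hSIS2, one_div]
    set a := 2 * z * hSIS2 x with ha
    -- derivative of sinhc (2z h2)
    have hscale : HasFDerivAt (fun y : ℝ × ℝ => 2 * z * hSIS2 y) ((2 * z) • _) x :=
      h2d.const_mul (2 * z)
    have hcomp : HasFDerivAt (fun y : ℝ × ℝ => sinhc (2 * z * hSIS2 y))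
        (sinhcD a • (2 * z) • (_ : ℝ × ℝ →L[ℝ] ℝ)) x :=
      HasDerivAt.comp_hasFDerivAt (h₂ := sinhc) (f := fun y : ℝ × ℝ => 2 * z * hSIS2 y) x (hasDerivAt_sinhc a) hscale
    -- derivative of h1
    have hqp : HasFDerivAt (fun y : ℝ × ℝ => y.1 * y.2)
        (x.1 • ContinuousLinearMap.snd ℝ ℝ ℝ + x.2 • ContinuousLinearMap.fst ℝ ℝ ℝ) x :=
      hq.mul hp
    have h1d : HasFDerivAt (hSIS1 z) _ x := (hcomp.mul hqp).neg
    rw [pb, h1d.fderiv, h2d.fderiv]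
    simp only [ContinuousLinearMap.neg_apply, ContinuousLinearMap.add_apply,
      ContinuousLinearMap.sub_apply, ContinuousLinearMap.smul_apply,
      ContinuousLinearMap.coe_fst', ContinuousLinearMap.coe_snd', smul_eq_mul]
    set s := sinhc (2 * z * hSIS2 x) with hs
    set d := sinhcD a with hd
    simp only [hSIS2]
    field_simp
    ring
  · intro x hx
    have hc : Filter.Tendsto sinhc (nhds 0) (nhds 1) := by
      have := (hasDerivAt_sinhc 0).continuousAt.tendsto
      simpa [sinhc] using this
    have harg : Filter.Tendsto (fun w : ℝ => 2 * w * hSIS2 x) (nhds 0) (nhds 0) := by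
      have : Continuous (fun w : ℝ => 2 * w * hSIS2 x) := by fun_prop
      simpa using this.tendsto 0
    have h1 : Filter.Tendsto (fun w : ℝ => sinhc (2 * w * hSIS2 x)) (nhds 0) (nhds 1) :=
      hc.comp harg
    have := (h1.mul_const (x.1 * x.2)).neg
    simpa [hSIS1] using this
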